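/- arXiv:2604.22785 — 4 statements merged into one kernel-verified Lean document; each statement's English description precedes it below -/
import Mathlib

section
/- Let α and β be nonempty finite types. Let π₁ : ℝ → α → ℝ satisfy ∑_{a ∈ α} π₁ θ a = 1 for every θ, each θ ↦ π₁ θ a differentiable at θ₀, and π₁ θ₀ a > 0. Let π₂ : α → β → ℝ satisfy π₂ a b ≥ 0 and ∑_{b ∈ β} π₂ a b = 1 for every a. Let q : α → ℝ satisfy q ã ≥ 0 and ∑_{ã ∈ α} q ã = 1, and let R : α → β → ℝ. Define J(θ) := ∑_{a ∈ α} ∑_{b ∈ β} π₁ θ a · π₂ a b · R a b and the counterfactual return G⁻ := ∑_{ã ∈ α} ∑_{b ∈ β} q ã · π₂ ã b · R ã b. Then J is differentiable at θ₀ and deriv J θ₀ = ∑_{a ∈ α} ∑_{b ∈ β} π₁ θ₀ a · π₂ a b · (deriv (fun θ => Real.log (π₁ θ a)) θ₀) · (R a b − G⁻). -/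
open Finset

/-! The downstream agent only enters through the expected downstream reward
`Q a = ∑ b, π₂ a b * R a b`, so `J θ = ∑ a, π₁ θ a * Q a` is a one-agent objective. Its derivative
is `∑ a, π₁' a * Q a`; the log-derivative trick `π₁ * (log π₁)' = π₁'` turns this into a score-function
expectation, and any constant baseline, in particular the counterfactual return `G⁻`, may be
subtracted from `Q` because `∑ a, π₁ θ a = 1` forces `∑ a, π₁' a = 0`. -/

section ScoreFunction

variable {ι : Type*} {s : Finset ι}

theorem sum_deriv_eq_zero_of_sum_eq_const {𝕜 F : Type*} [NontriviallyNormedField 𝕜]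
    [NormedAddCommGroup F] [NormedSpace 𝕜 F] {f : 𝕜 → ι → F} {c : F} {x : 𝕜}
    (hsum : ∀ θ, ∑ i ∈ s, f θ i = c) (hdiff : ∀ i ∈ s, DifferentiableAt 𝕜 (f · i) x) :
    ∑ i ∈ s, deriv (f · i) x = 0 := by
  rw [← deriv_fun_sum hdiff]
  simp only [hsum, deriv_const]

theorem Real.mul_deriv_log_eq_deriv {f : ℝ → ℝ} {x : ℝ} (hf : DifferentiableAt ℝ f x)
    (hx : f x ≠ 0) : f x * deriv (fun y => Real.log (f y)) x = deriv f x := by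
  rw [deriv.log hf hx, mul_div_cancel₀ _ hx]

theorem sum_mul_sub_const_of_sum_eq_one {p : ι → ℝ} (hp : ∑ i ∈ s, p i = 1) (r : ι → ℝ)
    (c : ℝ) : ∑ i ∈ s, p i * (r i - c) = ∑ i ∈ s, p i * r i - c := by
  simp only [mul_sub, sum_sub_distrib, ← sum_mul, hp, one_mul]

theorem hasDerivAt_sum_mul_score_sub_baseline {f : ℝ → ι → ℝ} {x : ℝ}
    (hsum : ∀ θ, ∑ i ∈ s, f θ i = 1) (hdiff : ∀ i ∈ s, DifferentiableAt ℝ (f · i) x)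
    (hne : ∀ i ∈ s, f x i ≠ 0) (r : ι → ℝ) (c : ℝ) :
    HasDerivAt (fun θ => ∑ i ∈ s, f θ i * r i)
      (∑ i ∈ s, f x i * deriv (fun θ => Real.log (f θ i)) x * (r i - c)) x := by
  have hscore : ∀ i ∈ s, f x i * deriv (fun θ => Real.log (f θ i)) x * (r i - c)
      = deriv (f · i) x * r i - deriv (f · i) x * c := fun i hi => by
    rw [Real.mul_deriv_log_eq_deriv (hdiff i hi) (hne i hi), mul_sub]
  rw [sum_congr rfl hscore, sum_sub_distrib, ← sum_mul,
    sum_deriv_eq_zero_of_sum_eq_const hsum hdiff, zero_mul, sub_zero]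
  exact HasDerivAt.fun_sum fun i hi => (hdiff i hi).hasDerivAt.mul_const (r i)

end ScoreFunction

theorem first_agent_policy_gradient_with_counterfactual_baseline_general
    {α β : Type*} [Fintype α] [Fintype β]
    (π₁ : ℝ → α → ℝ) (θ₀ : ℝ)
    (hsum₁ : ∀ θ, ∑ a, π₁ θ a = 1)
    (hdiff₁ : ∀ a, DifferentiableAt ℝ (fun θ => π₁ θ a) θ₀)
    (hpos₁ : ∀ a, 0 < π₁ θ₀ a)
    (π₂ : α → β → ℝ) (hsum₂ : ∀ a, ∑ b, π₂ a b = 1)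
    (q : α → ℝ)
    (R : α → β → ℝ) :
    DifferentiableAt ℝ (fun θ => ∑ a, ∑ b, π₁ θ a * π₂ a b * R a b) θ₀ ∧
      deriv (fun θ => ∑ a, ∑ b, π₁ θ a * π₂ a b * R a b) θ₀
        = ∑ a, ∑ b, π₁ θ₀ a * π₂ a b
            * deriv (fun θ => Real.log (π₁ θ a)) θ₀
            * (R a b - ∑ a', ∑ b', q a' * π₂ a' b' * R a' b') := by
  set G := ∑ a', ∑ b', q a' * π₂ a' b' * R a' b'
  set Q : α → ℝ := fun a => ∑ b, π₂ a b * R a b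
  have hJ : (fun θ => ∑ a, ∑ b, π₁ θ a * π₂ a b * R a b) = fun θ => ∑ a, π₁ θ a * Q a := by
    simp only [Q, mul_sum, mul_assoc]
  have hmarginal : ∀ a, ∑ b, π₁ θ₀ a * π₂ a b * deriv (fun θ => Real.log (π₁ θ a)) θ₀ * (R a b - G)
      = π₁ θ₀ a * deriv (fun θ => Real.log (π₁ θ a)) θ₀ * (Q a - G) := fun a => by
    rw [← sum_mul_sub_const_of_sum_eq_one (hsum₂ a), mul_sum]
    exact sum_congr rfl fun b _ => by ring
  have hgrad := hasDerivAt_sum_mul_score_sub_baseline (s := univ) hsum₁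
    (fun a _ => hdiff₁ a) (fun a _ => (hpos₁ a).ne') Q G
  rw [hJ, sum_congr rfl fun a _ => hmarginal a]
  exact ⟨hgrad.differentiableAt, hgrad.deriv⟩

/-- Single-turn specialization of Theorem 1 for the first agent in a two-agent
autoregressive pipeline with downstream resampling: the counterfactual return
`G⁻` is obtained by replacing the first agent's proposal with a draw from the
replacement distribution `q` and resampling the downstream proposal. -/
theorem first_agent_policy_gradient_with_counterfactual_baseline
    {α β : Type*} [Fintype α] [Nonempty α] [Fintype β] [Nonempty β]
    (π₁ : ℝ → α → ℝ) (θ₀ : ℝ)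
    (hsum₁ : ∀ θ, ∑ a, π₁ θ a = 1)
    (hdiff₁ : ∀ a, DifferentiableAt ℝ (fun θ => π₁ θ a) θ₀)
    (hpos₁ : ∀ a, 0 < π₁ θ₀ a)
    (π₂ : α → β → ℝ) (hπ₂ : ∀ a b, 0 ≤ π₂ a b) (hsum₂ : ∀ a, ∑ b, π₂ a b = 1)
    (q : α → ℝ) (hq : ∀ a, 0 ≤ q a) (hqsum : ∑ a, q a = 1)
    (R : α → β → ℝ) :
    DifferentiableAt ℝ (fun θ => ∑ a, ∑ b, π₁ θ a * π₂ a b * R a b) θ₀ ∧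
      deriv (fun θ => ∑ a, ∑ b, π₁ θ a * π₂ a b * R a b) θ₀
        = ∑ a, ∑ b, π₁ θ₀ a * π₂ a b
            * deriv (fun θ => Real.log (π₁ θ a)) θ₀
            * (R a b - ∑ a', ∑ b', q a' * π₂ a' b' * R a' b') :=
  first_agent_policy_gradient_with_counterfactual_baseline_general π₁ θ₀ hsum₁ hdiff₁ hpos₁ π₂ hsum₂
    q R
end

section
/- Let (Ω, 𝔪, ℙ) be a probability space, K a positive natural number, I : Ω → Fin K a measurable random variable with ℙ(I = j) > 0 for every j, and G : Ω → ℝ integrable. Let p̂ : Fin K → ℝ be arbitrary with p̂ j > 0 for every j, and set μ j := (ℙ(I = j))⁻¹ · E[G · indicator of {I = j}] (the true conditional expectation of G given I = j). Define Ĝ_j(ω) := μ j + (indicator of {I = j})(ω) / (p̂ j) · (G(ω) − μ j). Then for every j, E[Ĝ_j] = μ j. -/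
open MeasureTheory

/-!
On the event `{I = j}` the regression value `μ j` is the average of `G`, so the residual
`G - μ j` integrates to zero over that event. The correction term of the estimator is this
residual restricted to the event and scaled by the constant `(phat j)⁻¹`, hence has mean zero
whatever `phat j` is, and the estimator's mean is `μ j`.
-/

section IndicatorIntegrals

theorem indicator_one_div_mul_eq {α : Type*} (s : Set α) (a : ℝ) (g : α → ℝ) (x : α) :
    s.indicator (fun _ => (1 : ℝ)) x / a * g x = a⁻¹ * s.indicator g x := by
  by_cases hx : x ∈ s <;> simp [hx, div_eq_inv_mul]

variable {α : Type*} [MeasurableSpace α] {m : Measure α} {s : Set α}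

theorem integral_mul_indicator_one (hs : MeasurableSet s) (f : α → ℝ) :
    ∫ x, f x * s.indicator (fun _ => (1 : ℝ)) x ∂m = ∫ x in s, f x ∂m := by
  simp_rw [← Set.indicator_mul_right, mul_one]
  exact integral_indicator hs

theorem integral_indicator_one_div_mul (hs : MeasurableSet s) (a : ℝ) (g : α → ℝ) :
    ∫ x, s.indicator (fun _ => (1 : ℝ)) x / a * g x ∂m = a⁻¹ * ∫ x in s, g x ∂m := by
  simp_rw [indicator_one_div_mul_eq, integral_const_mul, integral_indicator hs]

theorem integral_setAverage_add_indicator_div_mul_sub [IsProbabilityMeasure m]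
    (hs : MeasurableSet s) {f : α → ℝ} (hf : IntegrableOn f s m) (a : ℝ) :
    ∫ x, (⨍ y in s, f y ∂m + s.indicator (fun _ => (1 : ℝ)) x / a * (f x - ⨍ y in s, f y ∂m)) ∂m
      = ⨍ y in s, f y ∂m := by
  set c := ⨍ y in s, f y ∂m
  have hcorrection_int :
      Integrable (fun x => s.indicator (fun _ => (1 : ℝ)) x / a * (f x - c)) m := by
    refine (((hf.sub (integrableOn_const (C := c))).integrable_indicator hs).const_mul
      a⁻¹).congr (ae_of_all _ fun x => ?_)
    exact (indicator_one_div_mul_eq s a (fun y => f y - c) x).symm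
  have hcorrection_mean : ∫ x, s.indicator (fun _ => (1 : ℝ)) x / a * (f x - c) ∂m = 0 := by
    rw [integral_indicator_one_div_mul hs, setAverage_sub_setAverage (measure_ne_top m s),
      mul_zero]
  rw [integral_add (integrable_const c) hcorrection_int, hcorrection_mean, integral_const]
  simp

end IndicatorIntegrals

theorem dr_estimator_unbiased_correct_outcome_model_general
    {Ω : Type*} [MeasurableSpace Ω] (ℙ : Measure Ω) [IsProbabilityMeasure ℙ]
    (K : ℕ)
    (I : Ω → Fin K) (hI : Measurable I)
    (G : Ω → ℝ) (hG : Integrable G ℙ)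
    (phat : Fin K → ℝ)
    (μ : Fin K → ℝ)
    (hμ : ∀ j : Fin K, μ j = (ℙ {ω' | I ω' = j}).toReal⁻¹
        * ∫ ω, G ω * Set.indicator {ω' | I ω' = j} (fun _ => (1 : ℝ)) ω ∂ℙ)
    (j : Fin K) :
    ∫ ω, (μ j + Set.indicator {ω' | I ω' = j} (fun _ => (1 : ℝ)) ω
        / phat j * (G ω - μ j)) ∂ℙ = μ j := by
  have hs : MeasurableSet {ω | I ω = j} := hI (measurableSet_singleton j)
  have hμ_average : μ j = ⨍ ω in {ω' | I ω' = j}, G ω ∂ℙ := by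
    rw [hμ j, integral_mul_indicator_one hs, setAverage_eq, smul_eq_mul, measureReal_def]
  rw [hμ_average]
  exact integral_setAverage_add_indicator_div_mul_sub hs hG.integrableOn (phat j)

/-- Correct-outcome-model case of Corollary 1: if the regression model equals
the true conditional expectation of `G` given `I = j`, the doubly robust
estimator is unbiased even with misspecified propensities `phat`. -/
theorem dr_estimator_unbiased_correct_outcome_model
    {Ω : Type*} [MeasurableSpace Ω] (ℙ : Measure Ω) [IsProbabilityMeasure ℙ]
    (K : ℕ) (hK : 0 < K)
    (I : Ω → Fin K) (hI : Measurable I)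
    (hp : ∀ j : Fin K, 0 < ℙ {ω | I ω = j})
    (G : Ω → ℝ) (hG : Integrable G ℙ)
    (phat : Fin K → ℝ) (hphat : ∀ j, 0 < phat j)
    (μ : Fin K → ℝ)
    (hμ : ∀ j : Fin K, μ j = (ℙ {ω' | I ω' = j}).toReal⁻¹
        * ∫ ω, G ω * Set.indicator {ω' | I ω' = j} (fun _ => (1 : ℝ)) ω ∂ℙ)
    (j : Fin K) :
    ∫ ω, (μ j + Set.indicator {ω' | I ω' = j} (fun _ => (1 : ℝ)) ω
        / phat j * (G ω - μ j)) ∂ℙ = μ j :=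
  dr_estimator_unbiased_correct_outcome_model_general ℙ K I hI G hG phat μ hμ j
end

section
/- Let Ω := Bool × Bool × Bool carry the product ℙ of three fair coin measures (each coordinate equal to true with probability 1/2, independently). Define real-valued random variables A(ω) := indicator that ω.1 = true, Ã(ω) := indicator that ω.2.1 = true, and B(ω) := indicator that ω.2.2 = true, and let 𝒢 be the σ-algebra generated by the first coordinate (the comap of the Borel σ-algebra on Bool under ω ↦ ω.1). Then: (i) A and B have the same distribution (the pushforward measures of ℙ under A and under B coincide); (ii) the conditional expectation E[A − Ã | 𝒢] equals A − 1/2 almost everywhere; (iii) ℙ{ω : A(ω) − 1/2 = 0} = 0; and (iv) E[B − B | 𝒢] = 0 everywhere. -/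
open MeasureTheory ProbabilityTheory

/-- The fair coin measure on `Bool`. -/
noncomputable def coin : Measure Bool := (PMF.uniformOfFintype Bool).toMeasure

/-- The product of three independent fair coin measures. -/
noncomputable def P3 : Measure (Bool × Bool × Bool) := coin.prod (coin.prod coin)

/-- Agent 1's proposal, as the indicator of the first coordinate. -/
noncomputable def A (ω : Bool × Bool × Bool) : ℝ := if ω.1 = true then 1 else 0

/-- The independent replacement draw, as the indicator of the second coordinate. -/
noncomputable def Atil (ω : Bool × Bool × Bool) : ℝ := if ω.2.1 = true then 1 else 0

/-- The second mechanism's reward, as the indicator of the third coordinate. -/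
noncomputable def B (ω : Bool × Bool × Bool) : ℝ := if ω.2.2 = true then 1 else 0

/-- The σ-algebra generated by agent 1's action (the first coordinate). -/
def 𝒢 : MeasurableSpace (Bool × Bool × Bool) :=
  MeasurableSpace.comap (fun ω => ω.1) inferInstance

/-
Under the first mechanism `A` is `𝒢`-measurable while the replacement draw `Ã` is independent of `𝒢`
with mean `1/2`, so `E[A - Ã | 𝒢] = A - 1/2`, which is `±1/2` and never vanishes. Under the second
mechanism the reward does not react to the replacement at all, so the counterfactual difference is `0`.
Yet both rewards are indicators of a single fair coin, hence have the same law.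
-/

section CondExp

variable {Ω : Type*} {m mΩ : MeasurableSpace Ω} {μ : Measure Ω} [IsProbabilityMeasure μ]
  {X Y : Ω → ℝ}

theorem condExp_sub_of_indep (hm : m ≤ mΩ) (hX : StronglyMeasurable[m] X)
    (hXint : Integrable X μ) (hY : Measurable Y) (hYint : Integrable Y μ)
    (hindep : Indep (MeasurableSpace.comap Y inferInstance) m μ) :
    μ[X - Y | m] =ᵐ[μ] X - fun _ => μ[Y] := by
  have hYcond : μ[Y | m] =ᵐ[μ] fun _ => μ[Y] :=
    condExp_indep_eq hY.comap_le hm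
      (measurable_iff_comap_le.mpr le_rfl).stronglyMeasurable hindep
  filter_upwards [condExp_sub hXint hYint m, hYcond] with ω hsub hYω
  rw [hsub, Pi.sub_apply, condExp_of_stronglyMeasurable hm hX hXint, hYω, Pi.sub_apply]

end CondExp

instance : IsProbabilityMeasure coin := PMF.toMeasure.isProbabilityMeasure _

instance : IsProbabilityMeasure P3 := by unfold P3; infer_instance

theorem integral_coin (f : Bool → ℝ) : ∫ b, f b ∂coin = (f true + f false) / 2 := by
  rw [coin, PMF.integral_eq_sum, Fintype.sum_bool]
  simp [PMF.uniformOfFintype_apply, add_div, inv_mul_eq_div]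

theorem P3_map_fst : P3.map (fun ω => ω.1) = coin := by
  rw [P3, Measure.map_fst_prod, measure_univ, one_smul]

theorem P3_map_snd : P3.map (fun ω => ω.2) = coin.prod coin := by
  rw [P3, Measure.map_snd_prod, measure_univ, one_smul]

theorem P3_map_snd_fst : P3.map (fun ω => ω.2.1) = coin := by
  change P3.map (Prod.fst ∘ Prod.snd) = coin
  rw [← Measure.map_map measurable_fst measurable_snd, P3_map_snd, Measure.map_fst_prod,
    measure_univ, one_smul]

theorem P3_map_snd_snd : P3.map (fun ω => ω.2.2) = coin := by
  change P3.map (Prod.snd ∘ Prod.snd) = coin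
  rw [← Measure.map_map measurable_snd measurable_snd, P3_map_snd, Measure.map_snd_prod,
    measure_univ, one_smul]

def boolIndicator (b : Bool) : ℝ := if b = true then 1 else 0

theorem measurable_boolIndicator : Measurable boolIndicator := measurable_of_countable _

theorem A_eq_comp : A = boolIndicator ∘ fun ω => ω.1 := rfl

theorem B_eq_comp : B = boolIndicator ∘ fun ω => ω.2.2 := rfl

theorem measurable_Atil : Measurable Atil := measurable_boolIndicator.comp (by fun_prop)

theorem integral_Atil : P3[Atil] = 1 / 2 := by
  change ∫ ω, boolIndicator ω.2.1 ∂P3 = 1 / 2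
  rw [← integral_map (by fun_prop) measurable_boolIndicator.aestronglyMeasurable,
    P3_map_snd_fst, integral_coin]
  norm_num [boolIndicator]

theorem indep_Atil_𝒢 : Indep (MeasurableSpace.comap Atil inferInstance) 𝒢 P3 :=
  (indepFun_prod (μ := coin) (ν := coin.prod coin) (X := id)
    (Y := fun ω => boolIndicator ω.1) measurable_id (by fun_prop)).symm

theorem stronglyMeasurable_A_𝒢 : StronglyMeasurable[𝒢] A :=
  (measurable_boolIndicator.comp (measurable_iff_comap_le.mpr le_rfl)).stronglyMeasurable

theorem A_sub_half_ne_zero (ω : Bool × Bool × Bool) : A ω - 1 / 2 ≠ 0 := by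
  unfold A
  split_ifs <;> norm_num

/-- Explicit counterexample for Proposition 2 (shared reward does not identify
individual contribution): `A` and `B` have the same distribution, yet agent 1's
counterfactual marginal contribution is `A - 1/2 ≠ 0` a.s. under the first
mechanism and identically `0` under the second. -/
theorem shared_reward_does_not_identify_contribution :
    Measure.map A P3 = Measure.map B P3 ∧
    P3[fun ω => A ω - Atil ω | 𝒢] =ᵐ[P3] (fun ω => A ω - 1 / 2) ∧
    P3 {ω | A ω - 1 / 2 = 0} = 0 ∧
    P3[fun ω => B ω - B ω | 𝒢] = 0 := by
  refine ⟨?_, ?_, ?_, ?_⟩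
  · rw [A_eq_comp, B_eq_comp, ← Measure.map_map measurable_boolIndicator (by fun_prop),
      ← Measure.map_map measurable_boolIndicator (by fun_prop), P3_map_fst, P3_map_snd_snd]
  · have h := condExp_sub_of_indep measurable_fst.comap_le stronglyMeasurable_A_𝒢 .of_finite
      measurable_Atil .of_finite indep_Atil_𝒢
    rwa [integral_Atil] at h
  · simp only [A_sub_half_ne_zero, Set.ofPred_false, measure_empty]
  · simp_rw [sub_self]
    exact condExp_zero
end

section
/- Let (Ω, 𝔪, ℙ) be a probability space, 𝒞 ⊆ 𝔪 a sub-σ-algebra, S ∈ 𝔪 a measurable event, and G : Ω → ℝ bounded measurable. Let p := E[indicator of S | 𝒞] and suppose there is δ > 0 with p ≥ δ almost everywhere. Let μ : Ω → ℝ be bounded and 𝒞-measurable. Then, almost everywhere, E[ μ + (indicator of S / p) · (G − μ) | 𝒞 ] = E[ (indicator of S) · G | 𝒞 ] / p. -/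
open MeasureTheory ProbabilityTheory

/-- Context-conditional doubly robust identity (Corollary 1): with true
conditional propensity `p = E[1_S | 𝒞]` bounded below and any bounded
`𝒞`-measurable outcome model `μ`, the doubly robust estimate satisfies
`E[μ + (1_S / p)(G - μ) | 𝒞] = E[1_S · G | 𝒞] / p` a.e. -/
theorem doubly_robust_conditional_identity
    {Ω : Type*} [mΩ : MeasurableSpace Ω] (P : Measure Ω) [IsProbabilityMeasure P]
    (𝒞 : MeasurableSpace Ω) (h𝒞 : 𝒞 ≤ mΩ)
    (S : Set Ω) (hS : MeasurableSet[mΩ] S)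
    (G : Ω → ℝ) (hGmeas : Measurable[mΩ] G) (hGbd : ∃ C : ℝ, ∀ ω, |G ω| ≤ C)
    (p : Ω → ℝ) (hp : p = P[S.indicator fun _ => (1 : ℝ) | 𝒞])
    (δ : ℝ) (hδ : 0 < δ) (hpδ : ∀ᵐ ω ∂P, δ ≤ p ω)
    (μ : Ω → ℝ) (hμmeas : Measurable[𝒞] μ) (hμbd : ∃ C : ℝ, ∀ ω, |μ ω| ≤ C) :
    P[fun ω => μ ω + S.indicator (fun _ => (1 : ℝ)) ω / p ω * (G ω - μ ω) | 𝒞]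
      =ᵐ[P] fun ω =>
        (P[fun ω' => S.indicator (fun _ => (1 : ℝ)) ω' * G ω' | 𝒞]) ω / p ω := by
  obtain ⟨CG, hCG⟩ := hGbd
  obtain ⟨Cμ, hCμ⟩ := hμbd
  have hS' : MeasurableSet[mΩ] S := hS
  have hG' : Measurable[mΩ] G := hGmeas
  set ind : Ω → ℝ := S.indicator (fun _ => (1 : ℝ)) with hind
  have hind_meas : Measurable[mΩ] ind := (measurable_const.indicator hS')
  have hind_bd : ∀ ω, |ind ω| ≤ 1 := by
    intro ω
    by_cases h : ω ∈ S <;> simp [ind, Set.indicator, h]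
  have hpSM : StronglyMeasurable[𝒞] p := hp ▸ stronglyMeasurable_condExp
  have hp_meas : Measurable[mΩ] p := Measurable.mono (ma := 𝒞) (ma' := mΩ) hpSM.measurable h𝒞 le_rfl
  have hμM : Measurable[mΩ] μ := Measurable.mono (ma := 𝒞) (ma' := mΩ) hμmeas h𝒞 le_rfl
  -- integrability helpers
  have hbdd_int : ∀ (f : Ω → ℝ), Measurable[mΩ] f → ∀ C : ℝ, (∀ᵐ ω ∂P, |f ω| ≤ C) →
      Integrable f P := by
    intro f hf C hC
    exact (integrable_const C).mono' hf.aestronglyMeasurable (by simpa using hC)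
  have hμint : Integrable μ P :=
    hbdd_int μ (hμM) Cμ (ae_of_all _ hCμ)
  have hindG_int : Integrable (fun ω => ind ω * G ω) P :=
    hbdd_int _ (hind_meas.mul hG') CG (ae_of_all _ (fun ω => by
      calc |ind ω * G ω| = |ind ω| * |G ω| := abs_mul _ _
        _ ≤ 1 * CG := by
            exact mul_le_mul (hind_bd ω) (hCG ω) (abs_nonneg _) zero_le_one
        _ = CG := one_mul _))
  have hindμ_int : Integrable (fun ω => ind ω * μ ω) P :=
    hbdd_int _ (hind_meas.mul hμM) Cμ (ae_of_all _ (fun ω => by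
      calc |ind ω * μ ω| = |ind ω| * |μ ω| := abs_mul _ _
        _ ≤ 1 * Cμ := mul_le_mul (hind_bd ω) (hCμ ω) (abs_nonneg _) zero_le_one
        _ = Cμ := one_mul _))
  have hg_int : Integrable (fun ω => ind ω * (G ω - μ ω)) P := by
    have : (fun ω => ind ω * (G ω - μ ω))
        = fun ω => ind ω * G ω - ind ω * μ ω := by
      funext ω; ring
    rw [this]; exact hindG_int.sub hindμ_int
  have hp_ne : ∀ᵐ ω ∂P, p ω ≠ 0 := by
    filter_upwards [hpδ] with ω h using (lt_of_lt_of_le hδ h).ne'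
  have hfg_int : Integrable (fun ω => (p ω)⁻¹ * (ind ω * (G ω - μ ω))) P := by
    refine hbdd_int _ ((hp_meas.inv).mul (hind_meas.mul (hG'.sub
      hμM))) (δ⁻¹ * (CG + Cμ)) ?_
    filter_upwards [hpδ] with ω hω
    have hpω : 0 < p ω := lt_of_lt_of_le hδ hω
    rw [abs_mul]
    have hb1 : |(p ω)⁻¹| ≤ δ⁻¹ := by
      rw [abs_inv, abs_of_pos hpω]
      exact inv_anti₀ hδ hω
    have hb2 : |ind ω * (G ω - μ ω)| ≤ CG + Cμ := by
      calc |ind ω * (G ω - μ ω)| = |ind ω| * |G ω - μ ω| := abs_mul _ _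
        _ ≤ 1 * (CG + Cμ) := by
            refine mul_le_mul (hind_bd ω) ?_ (abs_nonneg _) zero_le_one
            exact (abs_sub _ _).trans (add_le_add (hCG ω) (hCμ ω))
        _ = CG + Cμ := one_mul _
    exact mul_le_mul hb1 hb2 (abs_nonneg _) (by positivity)
  -- rewrite the integrand
  have heq : (fun ω => μ ω + ind ω / p ω * (G ω - μ ω))
      = fun ω => μ ω + (p ω)⁻¹ * (ind ω * (G ω - μ ω)) := by
    funext ω; rw [div_eq_mul_inv]; ring
  have h1 : P[fun ω => μ ω + (p ω)⁻¹ * (ind ω * (G ω - μ ω)) | 𝒞]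
      =ᵐ[P] fun ω => (P[μ | 𝒞]) ω + (P[fun ω => (p ω)⁻¹ * (ind ω * (G ω - μ ω)) | 𝒞]) ω :=
    condExp_add hμint hfg_int 𝒞
  have hμcond : P[μ | 𝒞] = μ :=
    condExp_of_stronglyMeasurable h𝒞 (hμmeas.stronglyMeasurable) hμint
  have h2 : P[fun ω => (p ω)⁻¹ * (ind ω * (G ω - μ ω)) | 𝒞]
      =ᵐ[P] fun ω => (p ω)⁻¹ * (P[fun ω => ind ω * (G ω - μ ω) | 𝒞]) ω := by
    have := condExp_mul_of_stronglyMeasurable_left (m := 𝒞) (μ := P)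
      (f := fun ω => (p ω)⁻¹) (g := fun ω => ind ω * (G ω - μ ω))
      ((Measurable.inv hpSM.measurable).stronglyMeasurable) (by simpa [Pi.mul_apply, Pi.mul_def] using hfg_int) hg_int
    simpa [Pi.mul_def] using this
  have h3 : P[fun ω => ind ω * (G ω - μ ω) | 𝒞]
      =ᵐ[P] fun ω => (P[fun ω => ind ω * G ω | 𝒞]) ω - (P[fun ω => ind ω * μ ω | 𝒞]) ω := by
    have heq2 : (fun ω => ind ω * (G ω - μ ω))
        = fun ω => ind ω * G ω - ind ω * μ ω := by funext ω; ring
    rw [heq2]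
    exact condExp_sub hindG_int hindμ_int 𝒞
  have h4 : P[fun ω => ind ω * μ ω | 𝒞] =ᵐ[P] fun ω => μ ω * p ω := by
    have hc : (fun ω => ind ω * μ ω) = fun ω => μ ω * ind ω := by funext ω; ring
    rw [hc]
    have := condExp_mul_of_stronglyMeasurable_left (m := 𝒞) (μ := P)
      (f := μ) (g := ind) hμmeas.stronglyMeasurable
      (by simpa [Pi.mul_apply, Pi.mul_def, mul_comm] using hindμ_int)
      (hbdd_int ind hind_meas 1 (ae_of_all _ hind_bd))
    refine this.trans ?_
    rw [hp]
    rfl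
  rw [heq]
  refine h1.trans ?_
  filter_upwards [h2, h3, h4, hp_ne] with ω h2ω h3ω h4ω hpω
  simp only [Pi.add_apply, hμcond]
  rw [h2ω, h3ω, h4ω]
  field_simp
  ring
end
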